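/- Let Σ, V be real Hilbert spaces, a : Σ × Σ → ℝ and b : Σ × V → ℝ continuous bilinear forms. Let Z = {σ ∈ Σ : b(σ,v) = 0 for all v ∈ V}. Assume a is Z-elliptic (a(σ,σ) ≥ α‖σ‖² for all σ ∈ Z, some α > 0) and b satisfies the inf-sup condition with constant β > 0. Then for every κ ∈ Σ and l ∈ V there exists a unique pair (σ,u) ∈ Σ × V with a(σ,τ) + b(τ,u) = (κ,τ)_Σ for all τ ∈ Σ and b(σ,v) = (l,v)_V for all v ∈ V. -/

import Mathlib

/-!
Let `B = opOfBilin b : E → V` be the operator with `⟪B σ, v⟫ = b σ v`, so that `Z = ker B`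
and the inf-sup condition says that `B†` is bounded below by `β`. Then `B†` has closed range
`(ker B)ᗮ`, and `B` is onto because `B B†` is coercive. Solve `B σ₀ = l`, correct `σ₀` inside
`Z` by Lax–Milgram for `a` on `Z`, and recover `u` from `B† u = κ - a σ`, which lies in
`(ker B)ᗮ`. Uniqueness: for the homogeneous system `σ ∈ Z` and `a σ σ = 0`, so `σ = 0`;
then `B† u = 0`, so `u = 0`.
-/
open scoped RealInnerProductSpace InnerProduct
open InnerProductSpace ContinuousLinearMap

theorem ContinuousLinearMap.range_eq_orthogonal_ker_adjoint_of_bounded_below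
    {𝕜 E V : Type*} [RCLike 𝕜]
    [NormedAddCommGroup E] [InnerProductSpace 𝕜 E] [CompleteSpace E]
    [NormedAddCommGroup V] [InnerProductSpace 𝕜 V] [CompleteSpace V]
    {T : V →L[𝕜] E} {β : ℝ} (hβ : 0 < β) (hT : ∀ v, β * ‖v‖ ≤ ‖T v‖) :
    T.range = (T†).kerᗮ := by
  have hclosed : IsClosed (T.range : Set E) := by
    refine (T.antilipschitz_of_bound (K := β⁻¹.toNNReal) fun v => ?_).isClosed_range
      T.uniformContinuous
    rw [Real.coe_toNNReal _ (inv_nonneg.mpr hβ.le), inv_mul_eq_div, le_div_iff₀' hβ]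
    exact hT v
  rw [orthogonal_ker, adjoint_adjoint, hclosed.submodule_topologicalClosure_eq]

section

variable {E V : Type*} [NormedAddCommGroup E] [InnerProductSpace ℝ E]
  [NormedAddCommGroup V] [InnerProductSpace ℝ V]

section LaxMilgram

theorem IsCoercive.exists_forall_apply_eq [CompleteSpace V] {B : V →L[ℝ] V →L[ℝ] ℝ}
    (hB : IsCoercive B) (f : StrongDual ℝ V) : ∃ u, ∀ w, B u w = f w :=
  ⟨hB.continuousLinearEquivOfBilin.symm ((toDual ℝ V).symm f), fun w => by
    rw [← hB.continuousLinearEquivOfBilin_apply, ContinuousLinearEquiv.apply_symm_apply,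
      toDual_symm_apply]⟩

theorem exists_mem_forall_apply_eq_of_coercive_on (a : E →L[ℝ] E →L[ℝ] ℝ) (K : Submodule ℝ E)
    [CompleteSpace K] {α : ℝ} (hα : 0 < α) (ha : ∀ σ ∈ K, α * ‖σ‖ ^ 2 ≤ a σ σ)
    (f : StrongDual ℝ E) : ∃ z ∈ K, ∀ τ ∈ K, a z τ = f τ := by
  have hcoer : IsCoercive (a.bilinearComp K.subtypeL K.subtypeL) :=
    ⟨α, hα, fun w => by simpa [sq, mul_assoc] using ha w w.2⟩
  obtain ⟨z, hz⟩ := hcoer.exists_forall_apply_eq (f ∘L K.subtypeL)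
  exact ⟨z, z.2, fun τ hτ => hz ⟨τ, hτ⟩⟩

theorem ContinuousLinearMap.surjective_adjoint_of_bounded_below
    [CompleteSpace E] [CompleteSpace V] {T : V →L[ℝ] E} {β : ℝ} (hβ : 0 < β)
    (hT : ∀ v, β * ‖v‖ ≤ ‖T v‖) :
    Function.Surjective (T†) := by
  have hcoer : IsCoercive ((innerSL ℝ : E →L[ℝ] E →L[ℝ] ℝ).bilinearComp T T) :=
    ⟨β ^ 2, by positivity, fun v => by
      have := pow_le_pow_left₀ (by positivity) (hT v) 2
      simpa [real_inner_self_eq_norm_sq, mul_pow, mul_assoc, ← sq] using this⟩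
  intro l
  obtain ⟨u, hu⟩ := hcoer.exists_forall_apply_eq (innerSL ℝ l)
  exact ⟨T u, ext_inner_right ℝ fun w => by simpa [adjoint_inner_left] using hu w⟩

end LaxMilgram

section opOfBilin

variable [CompleteSpace V] (b : E →L[ℝ] V →L[ℝ] ℝ)

noncomputable def opOfBilin : E →L[ℝ] V :=
  (toDual ℝ V).symm.toContinuousLinearEquiv.toContinuousLinearMap ∘L b

@[simp]
theorem inner_opOfBilin_apply (σ : E) (v : V) : ⟪opOfBilin b σ, v⟫ = b σ v := by
  simp [opOfBilin, toDual_symm_apply]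

theorem opOfBilin_eq_zero_iff {σ : E} : opOfBilin b σ = 0 ↔ ∀ v, b σ v = 0 := by
  simp only [← inner_opOfBilin_apply b σ]
  exact ⟨fun h v => by simp [h], fun h => ext_inner_right ℝ fun v => by simp [h]⟩

variable [CompleteSpace E]

@[simp]
theorem inner_adjoint_opOfBilin_apply (v : V) (σ : E) : ⟪((opOfBilin b)†) v, σ⟫ = b σ v := by
  rw [adjoint_inner_left, real_inner_comm, inner_opOfBilin_apply]

theorem mul_norm_le_norm_adjoint_opOfBilin {β : ℝ}
    (hinfsup : ∀ v : V, β * ‖v‖ ≤ ⨆ τ : {τ : E // τ ≠ 0}, b τ v / ‖(τ : E)‖) (v : V) :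
    β * ‖v‖ ≤ ‖((opOfBilin b)†) v‖ := by
  refine (hinfsup v).trans (Real.iSup_le (fun τ => ?_) (norm_nonneg _))
  rw [div_le_iff₀ (norm_pos_iff.mpr τ.2), ← inner_adjoint_opOfBilin_apply]
  exact real_inner_le_norm _ _

end opOfBilin

section SaddlePoint

variable [CompleteSpace E] [CompleteSpace V] (a : E →L[ℝ] E →L[ℝ] ℝ) (b : E →L[ℝ] V →L[ℝ] ℝ)
  {α β : ℝ} (hα : 0 < α) (hβ : 0 < β) (hell : ∀ σ, (∀ v, b σ v = 0) → α * ‖σ‖ ^ 2 ≤ a σ σ)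
  (hinfsup : ∀ v, β * ‖v‖ ≤ ‖((opOfBilin b)†) v‖)
include hα hβ hell hinfsup

theorem exists_saddlePoint (κ : E) (l : V) :
    ∃ σ u, (∀ τ, a σ τ + b τ u = ⟪κ, τ⟫) ∧ ∀ v, b σ v = ⟪l, v⟫ := by
  have := (opOfBilin b).isClosed_ker.completeSpace_coe
  obtain ⟨σ₀, hσ₀⟩ :=
    (opOfBilin b).adjoint_adjoint ▸ surjective_adjoint_of_bounded_below hβ hinfsup l
  obtain ⟨z, hzZ, hz⟩ := exists_mem_forall_apply_eq_of_coercive_on a (opOfBilin b).ker hα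
    (fun σ hσ => hell σ ((opOfBilin_eq_zero_iff b).mp hσ)) (innerSL ℝ κ - a σ₀)
  set r := (toDual ℝ E).symm (innerSL ℝ κ - a (σ₀ + z))
  have hr : r ∈ (opOfBilin b).kerᗮ := by
    intro τ hτ
    rw [real_inner_comm, toDual_symm_apply]
    simp [hz τ hτ]
  obtain ⟨u, hu⟩ : r ∈ ((opOfBilin b)†).range := by
    simpa [range_eq_orthogonal_ker_adjoint_of_bounded_below hβ hinfsup] using hr
  refine ⟨σ₀ + z, u, fun τ => ?_, fun v => ?_⟩
  · have := congrArg (⟪·, τ⟫) hu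
    simp only [coe_coe, inner_adjoint_opOfBilin_apply, r, toDual_symm_apply, sub_apply,
      innerSL_apply_apply, map_add, add_apply] at this
    rw [map_add, add_apply]
    linarith
  · simp [(opOfBilin_eq_zero_iff b).mp hzZ v, ← inner_opOfBilin_apply b σ₀, hσ₀]

theorem eq_zero_of_homogeneous_saddlePoint {σ : E} {u : V} (h₁ : ∀ τ, a σ τ + b τ u = 0)
    (h₂ : ∀ v, b σ v = 0) : σ = 0 ∧ u = 0 := by
  obtain rfl : σ = 0 := by
    have haσ : a σ σ = 0 := by simpa [h₂] using h₁ σ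
    have := nonpos_of_mul_nonpos_right (haσ ▸ hell σ h₂) hα
    exact norm_eq_zero.mp ((sq_nonpos_iff _).mp this)
  have hTu : ((opOfBilin b)†) u = 0 := by
    have := h₁ (((opOfBilin b)†) u)
    rwa [map_zero, zero_apply, zero_add, ← inner_adjoint_opOfBilin_apply, inner_self_eq_zero]
      at this
  have := hinfsup u
  rw [hTu, norm_zero] at this
  exact ⟨rfl, norm_le_zero_iff.mp (nonpos_of_mul_nonpos_right this hβ)⟩

end SaddlePoint

end

theorem stmt_4 {E V : Type*}
    [NormedAddCommGroup E] [InnerProductSpace ℝ E] [CompleteSpace E]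
    [NormedAddCommGroup V] [InnerProductSpace ℝ V] [CompleteSpace V]
    (a : E →L[ℝ] E →L[ℝ] ℝ) (b : E →L[ℝ] V →L[ℝ] ℝ)
    (Z : Set E) (hZ : Z = {σ : E | ∀ v : V, b σ v = 0})
    (α : ℝ) (hα : 0 < α)
    (hell : ∀ σ ∈ Z, a σ σ ≥ α * ‖σ‖ ^ 2)
    (β : ℝ) (hβ : 0 < β)
    (hinfsup : ∀ v : V, β * ‖v‖ ≤ ⨆ τ : {τ : E // τ ≠ 0}, b τ v / ‖(τ : E)‖) :
    ∀ (κ : E) (l : V), ∃! p : E × V,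
      (∀ τ : E, a p.1 τ + b τ p.2 = ⟪κ, τ⟫) ∧
      (∀ v : V, b p.1 v = ⟪l, v⟫) := by
  subst hZ
  have hinfsup' := mul_norm_le_norm_adjoint_opOfBilin b hinfsup
  intro κ l
  obtain ⟨σ, u, hσu, hσ⟩ := exists_saddlePoint a b hα hβ hell hinfsup' κ l
  refine ⟨(σ, u), ⟨hσu, hσ⟩, ?_⟩
  rintro ⟨σ', u'⟩ ⟨hσu', hσ'⟩
  obtain ⟨hσσ', huu'⟩ := eq_zero_of_homogeneous_saddlePoint a b hα hβ hell hinfsup'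
    (σ := σ' - σ) (u := u' - u)
    (fun τ => by simp only [map_sub, sub_apply]; linarith [hσu τ, hσu' τ])
    (fun v => by simp [hσ, hσ'])
  rw [sub_eq_zero] at hσσ' huu'
  rw [hσσ', huu']
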